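/- arXiv:2403.16864 — 2 statements merged into one kernel-verified Lean document; each statement's English description precedes it below -/
import Mathlib

section
/- (One-step decrease, regime p5.) Let f1 ∈ F_{μ1,L1} and f2 ∈ F_{μ2,L2} with μ1 > −μ2 > 0, L1 > μ2, μ1 < L1, μ2 < L2, L2 > 0, and max{ (1/L1)·(2 + L2/μ2), 0 } < 1/μ1 + 1/μ2 + 1/L2. Let F := f1 − f2 and consider a DCA step from x to x⁺ with g2 ∈ ∂f2(x), g1⁺ ∈ ∂f1(x⁺), g1⁺ = g2, and let g2⁺ ∈ ∂f2(x⁺). Then F(x) − F(x⁺) ≥ ((μ1 + μ2)/μ2²)·(1/2)‖g1⁺ − g2⁺‖². -/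
open RealInnerProductSpace

variable {H : Type*} [NormedAddCommGroup H] [InnerProductSpace ℝ H]

/-- `f` has lower curvature `μ`, i.e. `f - (μ/2)‖·‖²` is convex. -/
def HasLowerCurvature (μ : ℝ) (f : H → ℝ) : Prop :=
  ConvexOn ℝ Set.univ fun x => f x - μ / 2 * ‖x‖ ^ 2

/-- `f` has upper curvature `L`, i.e. `(L/2)‖·‖² - f` is convex. -/
def HasUpperCurvature (L : ℝ) (f : H → ℝ) : Prop :=
  ConvexOn ℝ Set.univ fun x => L / 2 * ‖x‖ ^ 2 - f x

/-- `g` is a subgradient of `f` (of lower curvature `μ`) at `x`. -/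
def IsSubgradient (μ : ℝ) (f : H → ℝ) (x g : H) : Prop :=
  ∀ y, f y ≥ f x + ⟪g, y - x⟫ + μ / 2 * ‖y - x‖ ^ 2

/-! The curvature `μ₂ < 0` of `f₂` lets its interpolation inequalities (applied at `x, x⁺` in
both orders) trade off against the strong convexity of `f₁` at `x⁺`: the decrease minus the
claimed bound is a nonnegative combination of the subgradient inequality of `f₁`, the two
interpolation inequalities of `f₂` and the square `‖μ₂ (x - x⁺) - (g₂ - g₂⁺)‖²`. The weight of
the square is a positive multiple of `-(μ₁μ₂ + μ₁L₂ + μ₂L₂)`, which is where the condition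
`1/μ₁ + 1/μ₂ + 1/L₂ > 0` enters. The interpolation inequality itself is the classical one for
the convex `(L/2)‖·‖² - f`, whose upper curvature `L - μ` comes from the subgradients of `f`. -/

lemma norm_smul_sub_sq (c : ℝ) (d u : H) :
    ‖c • d - u‖ ^ 2 = c ^ 2 * ‖d‖ ^ 2 - 2 * c * ⟪u, d⟫ + ‖u‖ ^ 2 := by
  rw [norm_sub_sq_real, norm_smul, Real.norm_eq_abs, mul_pow, sq_abs, real_inner_smul_left,
    real_inner_comm]
  ring

lemma ConvexOn.add_inner_le_of_le_quadratic {Φ : H → ℝ} (hΦ : ConvexOn ℝ Set.univ Φ)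
    {p s : H} {C : ℝ} (hC : 0 ≤ C)
    (hub : ∀ y, Φ y ≤ Φ p + ⟪s, y - p⟫ + C / 2 * ‖y - p‖ ^ 2) (y : H) :
    Φ p + ⟪s, y - p⟫ ≤ Φ y := by
  set D := C / 2 * ‖y - p‖ ^ 2 with hD_def
  have hD : 0 ≤ D := by positivity
  -- `p` is a convex combination of `y` and the point `z` beyond `p`, where the model applies.
  have h_err : ∀ t > 0, Φ p + ⟪s, y - p⟫ ≤ Φ y + t * D := by
    intro t ht
    set z := p + t • (p - y)
    have hp : (t / (1 + t)) • y + (1 / (1 + t)) • z = p := by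
      match_scalars <;> field_simp
      ring
    have hconv := hΦ.2 (Set.mem_univ y) (Set.mem_univ z) (by positivity : 0 ≤ t / (1 + t))
      (by positivity : 0 ≤ 1 / (1 + t)) (by field_simp; ring)
    rw [hp, smul_eq_mul, smul_eq_mul] at hconv
    have hz : Φ z ≤ Φ p - t * ⟪s, y - p⟫ + t ^ 2 * D := by
      have hzp : z - p = (-t) • (y - p) := by module
      have := hub z
      rw [hzp, real_inner_smul_right, norm_smul, mul_pow, Real.norm_eq_abs, sq_abs, neg_sq] at this
      rw [hD_def]
      linarith
    have hmul : t * (Φ p + ⟪s, y - p⟫) ≤ t * (Φ y + t * D) := by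
      have h1t : (0 : ℝ) < 1 + t := by linarith
      rw [div_mul_eq_mul_div, div_mul_eq_mul_div, ← add_div, le_div_iff₀ h1t] at hconv
      nlinarith
    exact le_of_mul_le_mul_left hmul ht
  refine le_of_forall_pos_le_add fun ε hε => (h_err (ε / (D + 1)) (by positivity)).trans ?_
  have : ε / (D + 1) * D ≤ ε := by
    rw [div_mul_eq_mul_div, div_le_iff₀ (by positivity)]
    nlinarith
  linarith

lemma le_add_inner_sub_div_of_le_quadratic {Φ : H → ℝ} {p q s r : H} {C : ℝ} (hC : C ≠ 0)
    (hp : ∀ y, Φ p + ⟪s, y - p⟫ ≤ Φ y)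
    (hq : ∀ y, Φ y ≤ Φ q + ⟪r, y - q⟫ + C / 2 * ‖y - q‖ ^ 2) :
    Φ p ≤ Φ q + ⟪s, p - q⟫ - ‖s - r‖ ^ 2 / (2 * C) := by
  -- `y` minimises the quadratic model at `q` minus the tangent plane at `p`.
  set y := q + C⁻¹ • (s - r)
  have h1 := hp y
  have h2 := hq y
  have hyp : y - p = -(p - q) + C⁻¹ • (s - r) := by module
  have hyq : y - q = C⁻¹ • (s - r) := by module
  rw [hyp, inner_add_right, inner_neg_right, real_inner_smul_right] at h1
  rw [hyq, real_inner_smul_right, norm_smul, mul_pow, Real.norm_eq_abs, sq_abs] at h2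
  have hsr : ⟪s, s - r⟫ - ⟪r, s - r⟫ = ‖s - r‖ ^ 2 := by
    rw [← inner_sub_left, real_inner_self_eq_norm_sq]
  have hC' : C / 2 * (C⁻¹ ^ 2 * ‖s - r‖ ^ 2) - C⁻¹ * ‖s - r‖ ^ 2
      = -(‖s - r‖ ^ 2 / (2 * C)) := by
    field_simp
    ring
  linear_combination h1 + h2 - C⁻¹ * hsr + hC'

lemma IsSubgradient.quadratic_sub_le {μ : ℝ} {f : H → ℝ} {p g : H}
    (hg : IsSubgradient μ f p g) (L : ℝ) (y : H) :
    L / 2 * ‖y‖ ^ 2 - f y ≤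
      L / 2 * ‖p‖ ^ 2 - f p + ⟪L • p - g, y - p⟫ + (L - μ) / 2 * ‖y - p‖ ^ 2 := by
  have hy : ‖y‖ ^ 2 = ‖p‖ ^ 2 + 2 * ⟪p, y - p⟫ + ‖y - p‖ ^ 2 := by
    rw [← norm_add_sq_real, add_sub_cancel]
  rw [inner_sub_left, real_inner_smul_left, hy]
  linarith [hg y]

lemma HasUpperCurvature.interpolation {μ L : ℝ} {f : H → ℝ} (hf : HasUpperCurvature L f)
    (hμL : μ < L) {a b ga gb : H} (ha : IsSubgradient μ f a ga) (hb : IsSubgradient μ f b gb) :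
    f b ≤ f a + ⟪ga, b - a⟫ + L / 2 * ‖b - a‖ ^ 2
      - ‖L • (b - a) - (gb - ga)‖ ^ 2 / (2 * (L - μ)) := by
  have htangent := hf.add_inner_le_of_le_quadratic (sub_nonneg.2 hμL.le) (ha.quadratic_sub_le L)
  have h := le_add_inner_sub_div_of_le_quadratic (sub_ne_zero.2 hμL.ne') htangent
    (hb.quadratic_sub_le L)
  have hb2 : ‖b‖ ^ 2 = ‖a‖ ^ 2 + 2 * ⟪a, b - a⟫ + ‖b - a‖ ^ 2 := by
    rw [← norm_add_sq_real, add_sub_cancel]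
  have hab : a - b = -(b - a) := (neg_sub b a).symm
  have hw : L • a - ga - (L • b - gb) = -(L • (b - a) - (gb - ga)) := by module
  rw [hw, norm_neg, hab, inner_neg_right, inner_sub_left, real_inner_smul_left, hb2] at h
  linarith

lemma mul_add_mul_add_mul_neg_of_inv_add_inv_add_inv_pos {μ₁ μ₂ L : ℝ} (hμ₁ : 0 < μ₁)
    (hμ₂ : μ₂ < 0) (hL : 0 < L) (h : 0 < 1 / μ₁ + 1 / μ₂ + 1 / L) :
    μ₁ * μ₂ + μ₁ * L + μ₂ * L < 0 := by
  have hprod : μ₁ * μ₂ * L < 0 := mul_neg_of_neg_of_pos (mul_neg_of_pos_of_neg hμ₁ hμ₂) hL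
  have := hμ₁.ne'
  have := hμ₂.ne
  have := hL.ne'
  have e : (1 / μ₁ + 1 / μ₂ + 1 / L) * (μ₁ * μ₂ * L) = μ₁ * μ₂ + μ₁ * L + μ₂ * L := by
    field_simp
    ring
  rw [← e]
  exact mul_neg_of_pos_of_neg h hprod

/-- The scalar core of the one-step decrease: `F₁, F₂` are the decreases of `f₁, f₂`, and
`a = ‖d‖²`, `t = ⟪u, d⟫`, `s = ‖u‖²`, `γ = ⟪g₂, d⟫` for `d = x - x⁺`, `u = g₂ - g₂⁺`. -/
lemma one_step_decrease_of_bounds {μ₁ μ₂ L F₁ F₂ γ a t s : ℝ} (hμ : 0 < μ₁ + μ₂)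
    (hμ₂ : μ₂ < 0) (hL : μ₂ < L) (hR : μ₁ * μ₂ + μ₁ * L + μ₂ * L < 0)
    (h₁ : γ + μ₁ / 2 * a ≤ F₁)
    (h₂ : γ - L / 2 * a + (L ^ 2 * a - 2 * L * t + s) / (2 * (L - μ₂)) ≤ F₂)
    (h₂' : F₂ ≤ γ - t + L / 2 * a - (L ^ 2 * a - 2 * L * t + s) / (2 * (L - μ₂)))
    (hsq : 0 ≤ μ₂ ^ 2 * a - 2 * μ₂ * t + s) :
    (μ₁ + μ₂) / μ₂ ^ 2 * (1 / 2) * s ≤ F₁ - F₂ := by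
  have hLμ : 0 < L - μ₂ := by linarith
  have := hμ₂.ne
  have key : F₁ - F₂ - (μ₁ + μ₂) / μ₂ ^ 2 * (1 / 2) * s
      = (F₁ - (γ + μ₁ / 2 * a))
        + μ₁ / -μ₂ * (γ - t + L / 2 * a - (L ^ 2 * a - 2 * L * t + s) / (2 * (L - μ₂)) - F₂)
        + (μ₁ + μ₂) / -μ₂
          * (F₂ - (γ - L / 2 * a + (L ^ 2 * a - 2 * L * t + s) / (2 * (L - μ₂))))
        + -(μ₁ * μ₂ + μ₁ * L + μ₂ * L) / (2 * (L - μ₂) * μ₂ ^ 2)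
          * (μ₂ ^ 2 * a - 2 * μ₂ * t + s) := by
    field_simp
    ring
  rw [← sub_nonneg, key]
  have w₁ : 0 ≤ μ₁ / -μ₂ := div_nonneg (by linarith) (by linarith)
  have w₂ : 0 ≤ (μ₁ + μ₂) / -μ₂ := div_nonneg hμ.le (by linarith)
  have w₃ : 0 ≤ -(μ₁ * μ₂ + μ₁ * L + μ₂ * L) / (2 * (L - μ₂) * μ₂ ^ 2) :=
    div_nonneg (by linarith) (by positivity)
  have := mul_nonneg w₁ (sub_nonneg.2 h₂')
  have := mul_nonneg w₂ (sub_nonneg.2 h₂)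
  have := mul_nonneg w₃ hsq
  linarith

theorem dca_one_step_p5_general
    (mu1 mu2 L1 L2 : ℝ)
    (h1 : -mu2 < mu1) (h2 : 0 < -mu2)
    (h5 : mu2 < L2) (h6 : 0 < L2)
    (h7 : max ((1 / L1) * (2 + L2 / mu2)) 0 < 1 / mu1 + 1 / mu2 + 1 / L2)
    (f1 f2 : H → ℝ)
    (h2up : HasUpperCurvature L2 f2)
    (x xp g2 g2p : H)
    (hg2 : IsSubgradient mu2 f2 x g2) (hg1p : IsSubgradient mu1 f1 xp g2)
    (hg2p : IsSubgradient mu2 f2 xp g2p) :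
    (f1 x - f2 x) - (f1 xp - f2 xp) ≥
      (mu1 + mu2) / mu2 ^ 2 * ((1 : ℝ) / 2) * ‖g2 - g2p‖ ^ 2 := by
  have hR := mul_add_mul_add_mul_neg_of_inv_add_inv_add_inv_pos (by linarith) (by linarith) h6
    (lt_of_le_of_lt (le_max_right _ _) h7)
  have hf1 := hg1p x
  have hf2 := h2up.interpolation h5 hg2 hg2p
  have hf2' := h2up.interpolation h5 hg2p hg2
  have hsq := norm_smul_sub_sq mu2 (x - xp) (g2 - g2p)
  have hback : xp - x = -(x - xp) := (neg_sub x xp).symm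
  have hw : L2 • (xp - x) - (g2p - g2) = -(L2 • (x - xp) - (g2 - g2p)) := by module
  have hg2p_d : ⟪g2p, x - xp⟫ = ⟪g2, x - xp⟫ - ⟪g2 - g2p, x - xp⟫ := by
    rw [inner_sub_left]; ring
  rw [hw, norm_neg, hback, inner_neg_right, norm_neg, norm_smul_sub_sq] at hf2
  rw [hg2p_d, norm_smul_sub_sq] at hf2'
  have := one_step_decrease_of_bounds (F₁ := f1 x - f1 xp) (F₂ := f2 x - f2 xp)
    (γ := ⟪g2, x - xp⟫) (a := ‖x - xp‖ ^ 2) (t := ⟪g2 - g2p, x - xp⟫) (s := ‖g2 - g2p‖ ^ 2)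
    (by linarith) (by linarith) h5 hR (by linarith) (by linarith) (by linarith)
    (hsq ▸ sq_nonneg _)
  linarith

/-- one-step decrease, regime p5. -/
theorem dca_one_step_p5
    (mu1 mu2 L1 L2 : ℝ)
    (h1 : -mu2 < mu1) (h2 : 0 < -mu2) (h3 : mu2 < L1)
    (h4 : mu1 < L1) (h5 : mu2 < L2) (h6 : 0 < L2)
    (h7 : max ((1 / L1) * (2 + L2 / mu2)) 0 < 1 / mu1 + 1 / mu2 + 1 / L2)
    (f1 f2 : H → ℝ)
    (h1lo : HasLowerCurvature mu1 f1) (h1up : HasUpperCurvature L1 f1)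
    (h2lo : HasLowerCurvature mu2 f2) (h2up : HasUpperCurvature L2 f2)
    (x xp g2 g2p : H)
    (hg2 : IsSubgradient mu2 f2 x g2) (hg1p : IsSubgradient mu1 f1 xp g2)
    (hg2p : IsSubgradient mu2 f2 xp g2p) :
    (f1 x - f2 x) - (f1 xp - f2 xp) ≥
      (mu1 + mu2) / mu2 ^ 2 * ((1 : ℝ) / 2) * ‖g2 - g2p‖ ^ 2 :=
  dca_one_step_p5_general mu1 mu2 L1 L2 h1 h2 h5 h6 h7 f1 f2 h2up x xp g2 g2p hg2 hg1p hg2p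
end

section
/- (One-step decrease, regime p6.) Let f1 ∈ F_{μ1,L1} and f2 ∈ F_{μ2,L2} with μ2 > −μ1 > 0, L2 > μ1, μ1 < L1, μ2 < L2, L1 > 0, and max{ (1/L2)·(2 + L1/μ1), 0 } < 1/μ1 + 1/μ2 + 1/L1. Let F := f1 − f2 and consider a DCA step from x to x⁺ with g2 ∈ ∂f2(x), g1⁺ ∈ ∂f1(x⁺), g1⁺ = g2, and let g1 ∈ ∂f1(x). Then F(x) − F(x⁺) ≥ ((μ1 + μ2)/μ1²)·(1/2)‖g1 − g2‖². -/
open RealInnerProductSpace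

variable {H : Type*} [NormedAddCommGroup H] [InnerProductSpace ℝ H]

/-!
Interpolation for `f₁ ∈ F_{μ₁,L₁}` between `x` and `x⁺`, together with the subgradient
inequality for `f₂` at `x`, gives
`F x - F x⁺ ≥ (μ₁ + μ₂)/2 ‖x - x⁺‖² + ‖v‖²/(2(L₁ - μ₁))` with `v = g₁ - g₂ - μ₁ (x - x⁺)`;
symmetrised, it gives `⟪g₁ - g₂, x - x⁺⟫ ≥ μ₁ ‖x - x⁺‖² + ‖v‖²/(L₁ - μ₁)`.
Adding `-(μ₁ + μ₂)/μ₁ ≥ 0` times the second bound to the first trades `‖x - x⁺‖²` and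
`⟪g₁ - g₂, x - x⁺⟫` for `‖g₁ - g₂‖²` and leaves `‖v‖²` with coefficient
`-(μ₁μ₂ + μ₁L₁ + μ₂L₁)/(2μ₁²(L₁ - μ₁))`, which is nonnegative because `1/μ₁ + 1/μ₂ + 1/L₁ > 0`.
-/

open Filter Topology

theorem ConvexOn.add_inner_sub_le_of_le_quadratic {φ : H → ℝ}
    (hφ : ConvexOn ℝ Set.univ φ) {x s : H} {C : ℝ}
    (hC : ∀ y, φ y ≤ φ x + ⟪s, y - x⟫ + C * ‖y - x‖ ^ 2) (z : H) :
    φ x + ⟪s, z - x⟫ ≤ φ z := by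
  -- `x` is a convex combination of `z` and of the reflected point `x - τ • (z - x)`; let `τ → 0`.
  have hτ : ∀ τ > 0, φ x + ⟪s, z - x⟫ - τ * (C * ‖z - x‖ ^ 2) ≤ φ z := by
    intro τ hτ
    have h1τ : 0 < 1 + τ := by linarith
    set b := x - τ • (z - x)
    have hx : (τ / (1 + τ)) • z + (1 / (1 + τ)) • b = x := by
      simp only [b]; match_scalars <;> field_simp <;> ring
    have hconv := hφ.2 (Set.mem_univ z) (Set.mem_univ b) (div_nonneg hτ.le h1τ.le)
      (div_nonneg zero_le_one h1τ.le) (by field_simp; ring)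
    rw [hx, smul_eq_mul, smul_eq_mul] at hconv
    have hb : φ b ≤ φ x - τ * ⟪s, z - x⟫ + τ ^ 2 * (C * ‖z - x‖ ^ 2) := by
      have := hC b
      simp only [b, sub_sub_cancel_left, inner_neg_right, norm_neg, inner_smul_right, norm_smul,
        mul_pow, Real.norm_eq_abs, sq_abs] at this
      linarith
    have hcomb : (1 + τ) * φ x ≤ τ * φ z + φ b := by
      have := mul_le_mul_of_nonneg_left hconv h1τ.le
      field_simp at this
      linarith
    refine le_of_mul_le_mul_left ?_ hτ
    nlinarith
  have hlim : Tendsto (fun τ : ℝ => φ x + ⟪s, z - x⟫ - τ * (C * ‖z - x‖ ^ 2)) (𝓝[>] 0)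
      (𝓝 (φ x + ⟪s, z - x⟫)) :=
    ((continuous_const.sub (continuous_id.mul continuous_const)).tendsto' 0 _
      (by simp)).mono_left nhdsWithin_le_nhds
  exact le_of_tendsto hlim (eventually_nhdsWithin_of_forall hτ)

theorem HasUpperCurvature.le_add_inner_add_sq {L μ : ℝ} {f : H → ℝ}
    (hf : HasUpperCurvature L f) {x g : H} (hg : IsSubgradient μ f x g) (z : H) :
    f z ≤ f x + ⟪g, z - x⟫ + L / 2 * ‖z - x‖ ^ 2 := by
  have hexp : ∀ y, ‖y‖ ^ 2 = ‖x‖ ^ 2 + 2 * ⟪x, y - x⟫ + ‖y - x‖ ^ 2 := fun y => by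
    simpa using norm_add_sq_real x (y - x)
  have := ConvexOn.add_inner_sub_le_of_le_quadratic hf (x := x) (s := L • x - g)
    (C := (L - μ) / 2)
    (fun y => by have := hg y; rw [hexp y, inner_sub_left, real_inner_smul_left]; linarith) z
  rw [hexp z, inner_sub_left, real_inner_smul_left] at this
  linarith

theorem HasUpperCurvature.add_inner_add_sq_le {μ L : ℝ} {f : H → ℝ}
    (hf : HasUpperCurvature L f) (hμL : μ < L) {x y gx gy : H}
    (hgx : IsSubgradient μ f x gx) (hgy : IsSubgradient μ f y gy) :
    f y + ⟪gy, x - y⟫ + μ / 2 * ‖x - y‖ ^ 2 + ‖gx - gy - μ • (x - y)‖ ^ 2 / (2 * (L - μ))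
      ≤ f x := by
  set v := gx - gy - μ • (x - y) with hv_def
  set t := (L - μ)⁻¹
  have ht : t * (L - μ) = 1 := inv_mul_cancel₀ (sub_ne_zero.mpr hμL.ne')
  have hv : ‖v‖ ^ 2 = ⟪gx, v⟫ - ⟪gy, v⟫ - μ * ⟪x - y, v⟫ := by
    rw [← real_inner_self_eq_norm_sq]
    conv_lhs => arg 2; rw [hv_def]
    rw [inner_sub_left, inner_sub_left, real_inner_smul_left]
  -- compare the lower bound at `y` with the upper bound at `x` at the point `x - t • v`
  have hlow := hgy (x - t • v)
  have hup := hf.le_add_inner_add_sq hgx (x - t • v)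
  rw [show x - t • v - y = (x - y) - t • v by abel, norm_sub_sq_real, inner_sub_right,
    real_inner_smul_right, real_inner_smul_right, norm_smul, mul_pow, Real.norm_eq_abs,
    sq_abs] at hlow
  rw [sub_sub_cancel_left, inner_neg_right, norm_neg, real_inner_smul_right, norm_smul, mul_pow,
    Real.norm_eq_abs, sq_abs] at hup
  rw [show ‖v‖ ^ 2 / (2 * (L - μ)) = t / 2 * ‖v‖ ^ 2 by simp only [t]; field_simp]
  linear_combination hup + hlow + t * hv + (t * ‖v‖ ^ 2 / 2) * ht

theorem HasUpperCurvature.le_inner_sub_sub {μ L : ℝ} {f : H → ℝ}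
    (hf : HasUpperCurvature L f) (hμL : μ < L) {x y gx gy : H}
    (hgx : IsSubgradient μ f x gx) (hgy : IsSubgradient μ f y gy) :
    μ * ‖x - y‖ ^ 2 + ‖gx - gy - μ • (x - y)‖ ^ 2 / (L - μ) ≤ ⟪gx - gy, x - y⟫ := by
  have hxy := hf.add_inner_add_sq_le hμL hgx hgy
  have hyx := hf.add_inner_add_sq_le hμL hgy hgx
  rw [← neg_sub x y, inner_neg_right, norm_neg,
    show gy - gx - μ • -(x - y) = -(gx - gy - μ • (x - y)) by module, norm_neg] at hyx
  rw [mul_comm 2 (L - μ), ← div_div] at hxy hyx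
  rw [inner_sub_left]
  linear_combination hxy + hyx

theorem dca_step_decrease_ge {μ₁ μ₂ L₁ : ℝ} {f₁ f₂ : H → ℝ} (hf₁ : HasUpperCurvature L₁ f₁)
    (hμL : μ₁ < L₁) {x x' g₁ g₂ : H} (hg₂ : IsSubgradient μ₂ f₂ x g₂)
    (hg₁' : IsSubgradient μ₁ f₁ x' g₂) (hg₁ : IsSubgradient μ₁ f₁ x g₁) :
    (μ₁ + μ₂) / 2 * ‖x - x'‖ ^ 2 + ‖g₁ - g₂ - μ₁ • (x - x')‖ ^ 2 / (2 * (L₁ - μ₁))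
      ≤ (f₁ x - f₂ x) - (f₁ x' - f₂ x') := by
  have h₁ := hf₁.add_inner_add_sq_le hμL hg₁ hg₁'
  have h₂ := hg₂ x'
  rw [← neg_sub x x', inner_neg_right, norm_neg] at h₂
  linarith

theorem mul_add_mul_add_mul_neg_of_inv_add_inv_add_inv_pos_s7 {a b c : ℝ} (ha : a < 0)
    (hb : 0 < b) (hc : 0 < c) (h : 0 < 1 / a + 1 / b + 1 / c) : a * b + a * c + b * c < 0 := by
  have hprod : (1 / a + 1 / b + 1 / c) * (a * b * c) = a * b + a * c + b * c := by
    field_simp [ha.ne, hb.ne', hc.ne']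
    ring
  exact hprod ▸ mul_neg_of_pos_of_neg h (mul_neg_of_neg_of_pos (mul_neg_of_neg_of_pos ha hb) hc)

theorem dca_one_step_p6_general
    (mu1 mu2 L1 L2 : ℝ)
    (h1 : -mu1 < mu2) (h2 : 0 < -mu1)
    (h4 : mu1 < L1) (h6 : 0 < L1)
    (h7 : max ((1 / L2) * (2 + L1 / mu1)) 0 < 1 / mu1 + 1 / mu2 + 1 / L1)
    (f1 f2 : H → ℝ)
    (h1up : HasUpperCurvature L1 f1)
    (x xp g1 g2 : H)
    (hg2 : IsSubgradient mu2 f2 x g2) (hg1p : IsSubgradient mu1 f1 xp g2)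
    (hg1 : IsSubgradient mu1 f1 x g1) :
    (f1 x - f2 x) - (f1 xp - f2 xp) ≥
      (mu1 + mu2) / mu1 ^ 2 * ((1 : ℝ) / 2) * ‖g1 - g2‖ ^ 2 := by
  have hmu1 : mu1 < 0 := by linarith
  have hmu2 : 0 < mu2 := by linarith
  have hK : 0 < L1 - mu1 := by linarith
  have hreg := mul_add_mul_add_mul_neg_of_inv_add_inv_add_inv_pos_s7 hmu1 hmu2 h6
    ((le_max_right _ _).trans_lt h7)
  have hmono := h1up.le_inner_sub_sub h4 hg1 hg1p
  have hdec := dca_step_decrease_ge h1up h4 hg2 hg1p hg1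
  set t := ‖g1 - g2 - mu1 • (x - xp)‖ ^ 2 / (L1 - mu1) with ht
  rw [mul_comm 2 (L1 - mu1), ← div_div, ← ht] at hdec
  have hv : t * (L1 - mu1)
      = ‖g1 - g2‖ ^ 2 - 2 * mu1 * ⟪g1 - g2, x - xp⟫ + mu1 ^ 2 * ‖x - xp‖ ^ 2 := by
    rw [ht, div_mul_cancel₀ _ hK.ne', norm_sub_sq_real, real_inner_smul_right, norm_smul,
      mul_pow, Real.norm_eq_abs, sq_abs]
    ring
  rw [ge_iff_le, show (mu1 + mu2) / mu1 ^ 2 * (1 / 2) * ‖g1 - g2‖ ^ 2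
      = (mu1 + mu2) * ‖g1 - g2‖ ^ 2 / (2 * mu1 ^ 2) by ring, div_le_iff₀ (by nlinarith)]
  nlinarith [mul_le_mul_of_nonpos_left hmono (by nlinarith : 2 * mu1 * (mu1 + mu2) ≤ 0),
    mul_nonneg (by positivity : 0 ≤ t) (neg_nonneg.mpr hreg.le)]

/-- one-step decrease, regime p6. -/
theorem dca_one_step_p6
    (mu1 mu2 L1 L2 : ℝ)
    (h1 : -mu1 < mu2) (h2 : 0 < -mu1) (h3 : mu1 < L2)
    (h4 : mu1 < L1) (h5 : mu2 < L2) (h6 : 0 < L1)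
    (h7 : max ((1 / L2) * (2 + L1 / mu1)) 0 < 1 / mu1 + 1 / mu2 + 1 / L1)
    (f1 f2 : H → ℝ)
    (h1lo : HasLowerCurvature mu1 f1) (h1up : HasUpperCurvature L1 f1)
    (h2lo : HasLowerCurvature mu2 f2) (h2up : HasUpperCurvature L2 f2)
    (x xp g1 g2 : H)
    (hg2 : IsSubgradient mu2 f2 x g2) (hg1p : IsSubgradient mu1 f1 xp g2)
    (hg1 : IsSubgradient mu1 f1 x g1) :
    (f1 x - f2 x) - (f1 xp - f2 xp) ≥
      (mu1 + mu2) / mu1 ^ 2 * ((1 : ℝ) / 2) * ‖g1 - g2‖ ^ 2 :=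
  dca_one_step_p6_general mu1 mu2 L1 L2 h1 h2 h4 h6 h7 f1 f2 h1up x xp g1 g2 hg2 hg1p hg1
end
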